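/- arXiv:2208.13263 — 9 statements merged into one kernel-verified Lean document; each statement's English description precedes it below -/
import Mathlib

section
/- For every power of two q, the integer 2q^2+3 does not divide q^4(q^4-1)(q^2-1). -/
/-!
Modulo `2q² + 3` we have `2q² ≡ -3`, so `32 q⁴(q⁴ - 1)(q² - 1) ≡ 9 · 5 · (-5) = -225`.
Hence `2q² + 3` divides `225`, which forces `q ∈ {0, 1, 6}`; none of these is `2 ^ f` with `f > 0`.
-/

theorem two_mul_sq_add_three_dvd_225 {R : Type*} [CommRing R] {q : R}
    (h : 2 * q ^ 2 + 3 ∣ q ^ 4 * (q ^ 4 - 1) * (q ^ 2 - 1)) : 2 * q ^ 2 + 3 ∣ (225 : R) := by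
  have hcomb := (dvd_mul_right (2 * q ^ 2 + 3)
    (16 * q ^ 8 - 40 * q ^ 6 + 44 * q ^ 4 - 50 * q ^ 2 + 75)).sub (h.mul_left 32)
  convert hcomb using 1
  ring

theorem eq_zero_or_one_or_six_of_two_mul_sq_add_three_dvd {q : ℕ}
    (h : 2 * q ^ 2 + 3 ∣ q ^ 4 * (q ^ 4 - 1) * (q ^ 2 - 1)) : q = 0 ∨ q = 1 ∨ q = 6 := by
  rcases Nat.eq_zero_or_pos q with rfl | hq
  · exact Or.inl rfl
  have hz : (2 * q ^ 2 + 3 : ℤ) ∣ (q : ℤ) ^ 4 * ((q : ℤ) ^ 4 - 1) * ((q : ℤ) ^ 2 - 1) := by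
    have h' := Int.natCast_dvd_natCast.mpr h
    push_cast [Nat.one_le_pow _ _ hq] at h'
    exact h'
  have h225 : 2 * q ^ 2 + 3 ∣ 225 := by exact_mod_cast two_mul_sq_add_three_dvd_225 hz
  have hq10 : q ≤ 10 := by nlinarith [Nat.le_of_dvd (by norm_num) h225]
  interval_cases q <;> simp_all

theorem stmt_0 (f : ℕ) (hf : 0 < f) (q : ℕ) (hq : q = 2 ^ f) :
    ¬ (2 * q ^ 2 + 3 ∣ q ^ 4 * (q ^ 4 - 1) * (q ^ 2 - 1)) := by
  intro h
  subst hq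
  rcases eq_zero_or_one_or_six_of_two_mul_sq_add_three_dvd h with h0 | h1 | h6
  · exact absurd h0 (by positivity)
  · exact hf.ne' (Nat.pow_eq_one.mp h1 |>.resolve_left (by norm_num))
  · have h3 : 3 ∣ 2 ^ f := h6 ▸ (by norm_num)
    exact absurd (Nat.prime_three.dvd_of_dvd_pow h3) (by norm_num)
end

section
/- If q is a power of 2 and q^2+2 divides q^4(q^4-1)(q^2-1), then q = 2 or q = 4. -/
/-! Modulo `q ^ 2 + 2` we have `q ^ 2 ≡ -2`, so `q ^ 4 (q ^ 4 - 1) (q ^ 2 - 1) ≡ 4 · 3 · (-3) = -36`.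
Hence `q ^ 2 + 2` divides `36`, which bounds `q ≤ 4`; the only such powers `2 ^ f` with `f > 0`
are `2` and `4`. -/

theorem Int.sq_add_two_dvd_thirtySix_of_dvd {q : ℤ}
    (h : q ^ 2 + 2 ∣ q ^ 4 * (q ^ 4 - 1) * (q ^ 2 - 1)) : q ^ 2 + 2 ∣ 36 := by
  have hquot : (36 : ℤ) = (q ^ 2 + 2) * (q ^ 8 - 3 * q ^ 6 + 5 * q ^ 4 - 9 * q ^ 2 + 18)
      - q ^ 4 * (q ^ 4 - 1) * (q ^ 2 - 1) := by ring
  rw [hquot]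
  exact dvd_sub (dvd_mul_right _ _) h

theorem Nat.sq_add_two_dvd_thirtySix_of_dvd {q : ℕ}
    (h : q ^ 2 + 2 ∣ q ^ 4 * (q ^ 4 - 1) * (q ^ 2 - 1)) : q ^ 2 + 2 ∣ 36 := by
  rcases Nat.eq_zero_or_pos q with rfl | hq
  · norm_num
  have h2 : 1 ≤ q ^ 2 := Nat.one_le_pow _ _ hq
  have h4 : 1 ≤ q ^ 4 := Nat.one_le_pow _ _ hq
  have hz := Int.natCast_dvd_natCast.mpr h
  push_cast [Nat.cast_sub h2, Nat.cast_sub h4] at hz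
  exact_mod_cast Int.sq_add_two_dvd_thirtySix_of_dvd hz

theorem Nat.le_four_of_sq_add_two_dvd_thirtySix {q : ℕ} (h : q ^ 2 + 2 ∣ 36) : q ≤ 4 := by
  have hle : q ^ 2 + 2 ≤ 36 := Nat.le_of_dvd (by norm_num) h
  have hq : q < 6 := by nlinarith
  interval_cases q <;> omega

theorem stmt_1 (f : ℕ) (hf : 0 < f) (q : ℕ) (hq : q = 2 ^ f)
    (h : q ^ 2 + 2 ∣ q ^ 4 * (q ^ 4 - 1) * (q ^ 2 - 1)) :
    q = 2 ∨ q = 4 := by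
  have hq4 : 2 ^ f ≤ 2 ^ 2 := hq ▸ Nat.le_four_of_sq_add_two_dvd_thirtySix
    (Nat.sq_add_two_dvd_thirtySix_of_dvd h)
  have hf2 : f ≤ 2 := (Nat.pow_le_pow_iff_right (by norm_num)).mp hq4
  interval_cases f <;> simp [hq]
end

section
/- If q is a power of 2 and 2q^2+1 divides q^4(q^4-1)(q^2-1), then q = 2. -/
/-!
Modulo `n = 2q² + 1` we have `2q² ≡ -1`, so `4(q⁴ - 1) ≡ -3` and `2(q² - 1) ≡ -3`. Since `n` is
coprime to `q`, a divisibility `n ∣ q⁴(q⁴ - 1)(q² - 1)` therefore forces `n ∣ 9`, i.e. `q ≤ 2`.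
-/

lemma Int.isCoprime_two_mul_sq_add_one (q : ℤ) : IsCoprime (2 * q ^ 2 + 1) q :=
  ⟨1, -2 * q, by ring⟩

lemma Int.two_mul_sq_add_one_dvd_nine {q : ℤ}
    (h : 2 * q ^ 2 + 1 ∣ q ^ 4 * (q ^ 4 - 1) * (q ^ 2 - 1)) : 2 * q ^ 2 + 1 ∣ 9 := by
  have hprod : 2 * q ^ 2 + 1 ∣ (q ^ 4 - 1) * (q ^ 2 - 1) := by
    rw [mul_assoc] at h
    exact ((Int.isCoprime_two_mul_sq_add_one q).pow_right).dvd_of_dvd_mul_left h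
  have key : 8 * ((q ^ 4 - 1) * (q ^ 2 - 1)) - (2 * q ^ 2 + 1) * (4 * q ^ 4 - 6 * q ^ 2 - 1) = 9 := by
    ring
  rw [← key]
  exact dvd_sub (hprod.mul_left 8) (dvd_mul_right _ _)

lemma Nat.eq_two_of_two_mul_sq_add_one_dvd {q : ℕ} (hq : 2 ≤ q)
    (h : 2 * q ^ 2 + 1 ∣ q ^ 4 * (q ^ 4 - 1) * (q ^ 2 - 1)) : q = 2 := by
  have hz : (2 * (q : ℤ) ^ 2 + 1) ∣ (q : ℤ) ^ 4 * ((q : ℤ) ^ 4 - 1) * ((q : ℤ) ^ 2 - 1) := by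
    have := Int.natCast_dvd_natCast.mpr h
    push_cast [Nat.cast_sub (Nat.one_le_pow 4 q (by omega)),
      Nat.cast_sub (Nat.one_le_pow 2 q (by omega))] at this
    exact this
  have h9 : 2 * q ^ 2 + 1 ∣ 9 := by exact_mod_cast Int.two_mul_sq_add_one_dvd_nine hz
  have := Nat.le_of_dvd (by norm_num) h9
  nlinarith

theorem stmt_2 (f : ℕ) (hf : 0 < f) (q : ℕ) (hq : q = 2 ^ f)
    (h : 2 * q ^ 2 + 1 ∣ q ^ 4 * (q ^ 4 - 1) * (q ^ 2 - 1)) :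
    q = 2 :=
  Nat.eq_two_of_two_mul_sq_add_one_dvd (hq ▸ Nat.le_self_pow hf.ne' 2) h
end

section
/- If q is a power of 2 and 3q^2+2 divides q^4(q^4-1)(q^2-1), then q = 4. -/
/-!
Reducing modulo `3q² + 2`, i.e. substituting `q² = -2/3`, turns `q⁴(q⁴ - 1)(q² - 1)` into
`100/243`; hence `3q² + 2` divides `100`. This bounds `q ≤ 5`, leaving the powers of two `2` and `4`,
of which only `4` passes (`50 ∣ 100`, but `14 ∤ 100`).
-/

theorem Int.three_mul_sq_add_two_dvd_hundred {q : ℤ}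
    (h : 3 * q ^ 2 + 2 ∣ q ^ 4 * (q ^ 4 - 1) * (q ^ 2 - 1)) : 3 * q ^ 2 + 2 ∣ 100 := by
  have hquot : 243 * (q ^ 4 * (q ^ 4 - 1) * (q ^ 2 - 1)) - 100 =
      (3 * q ^ 2 + 2) * (81 * q ^ 8 - 135 * q ^ 6 + 9 * q ^ 4 + 75 * q ^ 2 - 50) := by
    ring
  simpa using dvd_sub (h.mul_left 243) (Dvd.intro _ hquot.symm)

theorem Nat.three_mul_sq_add_two_dvd_hundred {q : ℕ}
    (h : 3 * q ^ 2 + 2 ∣ q ^ 4 * (q ^ 4 - 1) * (q ^ 2 - 1)) : 3 * q ^ 2 + 2 ∣ 100 := by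
  rcases q.eq_zero_or_pos with rfl | hq
  · norm_num
  have hz := Int.natCast_dvd_natCast.mpr h
  push_cast [Nat.one_le_pow _ _ hq] at hz
  exact_mod_cast Int.three_mul_sq_add_two_dvd_hundred hz

theorem stmt_3 (f : ℕ) (hf : 0 < f) (q : ℕ) (hq : q = 2 ^ f)
    (h : 3 * q ^ 2 + 2 ∣ q ^ 4 * (q ^ 4 - 1) * (q ^ 2 - 1)) :
    q = 4 := by
  subst hq
  have hdvd := Nat.three_mul_sq_add_two_dvd_hundred h
  have hf3 : f < 3 := by
    have hle : 3 * (2 ^ f) ^ 2 + 2 ≤ 100 := Nat.le_of_dvd (by norm_num) hdvd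
    by_contra! h3
    have : 2 ^ 3 ≤ 2 ^ f := Nat.pow_le_pow_right (by norm_num) h3
    nlinarith
  interval_cases f
  · norm_num at hdvd
  · rfl
end

section
/- For every power of two q > 2, the integer q^4-9 does not divide q^4(q^4-1)(q^2-1). -/
/-!
Modulo `q ^ 4 - 9` we have `q ^ 4 ≡ 9`, so multiplying the product by `q ^ 2 + 1` turns it into
`9 * 8 * 8 = 576`. Hence `q ^ 4 - 9` would divide `576`, which is too small for `q ≥ 5`;
the remaining power of two `q = 4` is checked directly.
-/

theorem pow_four_sub_nine_dvd_576_of_dvd {R : Type*} [CommRing R] {q : R}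
    (h : q ^ 4 - 9 ∣ q ^ 4 * (q ^ 4 - 1) * (q ^ 2 - 1)) : q ^ 4 - 9 ∣ 576 := by
  have key : (576 : R) = q ^ 4 * (q ^ 4 - 1) * (q ^ 2 - 1) * (q ^ 2 + 1)
      - (q ^ 4 - 9) * (q ^ 8 + 7 * q ^ 4 + 64) := by ring
  rw [key]
  exact dvd_sub (h.mul_right _) (dvd_mul_right _ _)

theorem Nat.not_pow_four_sub_nine_dvd {q : ℕ} (hq : 4 ≤ q) :
    ¬ (q ^ 4 - 9 ∣ q ^ 4 * (q ^ 4 - 1) * (q ^ 2 - 1)) := by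
  intro h
  have h9 : 9 ≤ q ^ 4 := le_trans (by norm_num) (Nat.pow_le_pow_left hq 4)
  have hq2_pos : 1 ≤ q ^ 2 := Nat.one_le_pow _ _ (by omega)
  have hq4_pos : 1 ≤ q ^ 4 := by omega
  have hZ : ((q : ℤ) ^ 4 - 9) ∣ 576 := by
    apply pow_four_sub_nine_dvd_576_of_dvd
    have := Int.natCast_dvd_natCast.mpr h
    push_cast [Nat.cast_sub h9, Nat.cast_sub hq2_pos, Nat.cast_sub hq4_pos] at this
    exact this
  have h576 : q ^ 4 - 9 ∣ 576 := by
    rw [← Int.natCast_dvd_natCast, Nat.cast_sub h9]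
    exact_mod_cast hZ
  have hle : q ^ 4 ≤ 585 := by have := Nat.le_of_dvd (by norm_num) h576; omega
  have hq_eq : q = 4 := by
    by_contra hne
    have : 5 ^ 4 ≤ q ^ 4 := Nat.pow_le_pow_left (by omega) 4
    omega
  subst hq_eq
  norm_num at h576

theorem stmt_4 (f : ℕ) (hf : 2 ≤ f) (q : ℕ) (hq : q = 2 ^ f) :
    ¬ (q ^ 4 - 9 ∣ q ^ 4 * (q ^ 4 - 1) * (q ^ 2 - 1)) :=
  Nat.not_pow_four_sub_nine_dvd (hq ▸ Nat.pow_le_pow_right two_pos hf)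
end

section
/- For a finite group G and a positive integer n dividing |G|, n divides the number of elements x in G with x^n = 1. -/
/-!
For coprime `m` and `n`, an element `x` with `x ^ (m * n) = 1` is uniquely a product `u * v` of
commuting elements with `u ^ m = 1` and `v ^ n = 1`. Counting these pairs by `u`, a non-central
`u` contributes, together with its conjugacy class, `|G : C(u)| * #{v ∈ C(u) | v ^ n = 1}`, which is
divisible by `n` (when `n ∣ |G|`) by induction on `|G|` applied to the centralizer `C(u)`. Hence
`#{x ^ (m * n) = 1} ≡ #{z ∈ Z(G) | z ^ m = 1} * #{x ^ n = 1} [MOD n]`.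

When `n = p ^ a` is the full `p`-part of `|G|` and `m = |G| / n`, the left side is `|G|` and the
central factor is prime to `p`, so `p ^ a ∣ #{x ^ p ^ a = 1}`. Smaller powers of `p` follow by
descent, since the elements of order `p ^ (c + 1)` come in blocks of
`φ (p ^ (c + 1)) = p ^ c * (p - 1)` generators of one cyclic subgroup. For general `n`, the
congruence with `n` replaced by each of its prime-power parts finishes the proof.
-/

open MulAction Subgroup

def FrobeniusDvd (G : Type*) [Group G] : Prop :=
  ∀ n, n ∣ Nat.card G → n ∣ Nat.card {x : G | x ^ n = 1}

theorem MulAction.dvd_sum_of_dvd_card_orbit_mul {G α : Type*} [Group G] [MulAction G α]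
    [Fintype α] {n : ℕ} (f : α → ℕ) (hf : ∀ (g : G) a, f (g • a) = f a)
    (h : ∀ a, n ∣ (orbit G a).ncard * f a) : n ∣ ∑ a, f a := by
  classical
  rw [← Finset.sum_fiberwise Finset.univ (fun a => (Quotient.mk'' a : orbitRel.Quotient G α)) f]
  refine Finset.dvd_sum fun ω _ => ?_
  induction ω using Quotient.inductionOn' with | h a => ?_
  have hfiber : ({b | (Quotient.mk'' b : orbitRel.Quotient G α) = Quotient.mk'' a} : Finset α)
      = (orbit G a).toFinset := by
    ext b
    simp [Quotient.eq'', orbitRel_apply]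
  have hconst : ∀ b ∈ (orbit G a).toFinset, f b = f a := by
    intro b hb
    obtain ⟨g, rfl⟩ := Set.mem_toFinset.mp hb
    exact hf g a
  rw [hfiber, Finset.sum_congr rfl hconst, Finset.sum_const, smul_eq_mul,
    ← Set.ncard_eq_toFinset_card']
  exact h a

theorem coprime_card_setOf_pow_eq_one {A : Type*} [CommGroup A] [Finite A] {m n : ℕ}
    (hmn : m.Coprime n) : n.Coprime (Nat.card {x : A | x ^ m = 1}) := by
  refine Nat.coprime_of_dvd fun k hk hkn hkA => ?_
  have : Fact k.Prime := ⟨hk⟩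
  obtain ⟨x, hx⟩ := exists_prime_orderOf_dvd_card' (G := (powMonoidHom m : A →* A).ker) k hkA
  have hkm : k ∣ m := hx ▸ orderOf_dvd_of_pow_eq_one (Subtype.ext x.2)
  exact hk.one_lt.ne' (Nat.eq_one_of_dvd_coprimes hmn hkm hkn)

section

variable {G : Type*} [Group G]

theorem Subgroup.card_setOf_pow_eq_one (H : Subgroup G) (n : ℕ) :
    Nat.card {x : H | x ^ n = 1} = Nat.card {x : G | x ∈ H ∧ x ^ n = 1} :=
  Nat.card_congr <| (Equiv.subtypeEquivRight fun x => by simp [Subtype.ext_iff]).trans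
    (Equiv.subtypeSubtypeEquivSubtypeInter (· ∈ H) (fun x : G => x ^ n = 1))

theorem dvd_index_mul_card_pow_eq_one [Finite G] {H : Subgroup G} (hH : FrobeniusDvd H)
    {n : ℕ} (hn : n ∣ Nat.card G) : n ∣ H.index * Nat.card {x : H | x ^ n = 1} := by
  have hgcd : n.gcd (Nat.card H) ∣ Nat.card {x : H | x ^ n = 1} := by
    have := hH _ (Nat.gcd_dvd_right n (Nat.card H))
    simpa [pow_gcd_eq_one, pow_card_eq_one'] using this
  have hindex : n ∣ n.gcd (Nat.card H) * H.index :=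
    dvd_gcd_mul_iff_dvd_mul.mpr (H.card_mul_index ▸ hn)
  exact hindex.trans (mul_comm (n.gcd _) H.index ▸ mul_dvd_mul_left _ hgcd)

theorem dvd_sum_noncenter [Fintype G] [DecidablePred (· ∈ center G)] {n : ℕ} (f : G → ℕ)
    (hf : ∀ g u, f (g * u * g⁻¹) = f u)
    (h : ∀ u ∉ center G, n ∣ (centralizer {u}).index * f u) :
    n ∣ ∑ u with u ∉ center G, f u := by
  rw [Finset.sum_filter]
  refine MulAction.dvd_sum_of_dvd_card_orbit_mul (G := ConjAct G) _ (fun g u => ?_) fun u => ?_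
  · have hconj : ConjAct.ofConjAct g * u * (ConjAct.ofConjAct g)⁻¹ ∈ center G ↔ u ∈ center G :=
      (mem_normalizer_iff.mp
        ((normalizer_eq_top_iff (H := center G)).mpr inferInstance ▸ mem_top _) u).symm
    simp only [ConjAct.smul_def, hconj, hf]
  · by_cases hu : u ∈ center G
    · simp [hu]
    · have horbit : (orbit (ConjAct G) u).ncard = (centralizer {u}).index := by
        rw [← index_stabilizer, ConjAct.stabilizer_eq_centralizer]
        rfl
      simpa [hu, horbit] using h u hu

theorem card_pow_mul_eq_one_eq_card_commuting_pairs {m n : ℕ} (hmn : m.Coprime n) :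
    Nat.card {x : G | x ^ (m * n) = 1} =
      Nat.card {p : G × G | p.1 ^ m = 1 ∧ p.2 ^ n = 1 ∧ Commute p.1 p.2} := by
  obtain ⟨a, ha⟩ := Nat.chineseRemainder hmn 1 0
  obtain ⟨b, hb⟩ := Nat.chineseRemainder hmn 0 1
  have hab : a + b ≡ 1 [MOD m * n] :=
    (Nat.modEq_and_modEq_iff_modEq_mul hmn).mp
      ⟨by simpa using ha.1.add hb.1, by simpa using ha.2.add hb.2⟩
  obtain ⟨a', rfl⟩ : n ∣ a := Nat.modEq_zero_iff_dvd.mp ha.2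
  obtain ⟨b', rfl⟩ : m ∣ b := Nat.modEq_zero_iff_dvd.mp hb.1
  refine Nat.card_congr
    { toFun x := ⟨(x.1 ^ (n * a'), x.1 ^ (m * b')), by
        have hx : x.1 ^ (m * n) = 1 := x.2
        refine ⟨?_, ?_, Commute.pow_pow_self _ _ _⟩
        · rw [← pow_mul, show n * a' * m = m * n * a' by ring, pow_mul, hx, one_pow]
        · rw [← pow_mul, show m * b' * n = m * n * b' by ring, pow_mul, hx, one_pow]⟩
      invFun p := ⟨p.1.1 * p.1.2, by
        show (_ : G) ^ (m * n) = 1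
        rw [p.2.2.2.mul_pow, pow_mul, p.2.1, one_pow, one_mul, mul_comm, pow_mul, p.2.2.1, one_pow]⟩
      left_inv x := Subtype.ext <| by
        simp only
        rw [← pow_add, pow_eq_pow_of_modEq hab x.2, pow_one]
      right_inv p := by
        obtain ⟨⟨u, v⟩, hu, hv, huv⟩ := p
        ext
        · simp only
          rw [huv.mul_pow, pow_mul v, hv, one_pow, mul_one, pow_eq_pow_of_modEq ha.1 hu, pow_one]
        · simp only
          rw [huv.mul_pow, pow_mul u, hu, one_pow, one_mul, pow_eq_pow_of_modEq hb.2 hv, pow_one] }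

theorem card_commuting_pairs_eq_sum [Fintype G] (m n : ℕ) :
    Nat.card {p : G × G | p.1 ^ m = 1 ∧ p.2 ^ n = 1 ∧ Commute p.1 p.2} =
      ∑ u, Nat.card {v : G | u ^ m = 1 ∧ v ^ n = 1 ∧ Commute u v} :=
  (Nat.card_congr (Equiv.subtypeProdEquivSigmaSubtype
    fun u v => u ^ m = 1 ∧ v ^ n = 1 ∧ Commute u v)).trans Nat.card_sigma

theorem card_pow_mul_eq_one_modEq [Finite G] (hG : ∀ H : Subgroup G, H ≠ ⊤ → FrobeniusDvd H)
    {m n : ℕ} (hmn : m.Coprime n) (hn : n ∣ Nat.card G) :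
    Nat.card {x : G | x ^ (m * n) = 1} ≡
      Nat.card {z : center G | z ^ m = 1} * Nat.card {x : G | x ^ n = 1} [MOD n] := by
  classical
  cases nonempty_fintype G
  set f : G → ℕ := fun u => Nat.card {v : G | u ^ m = 1 ∧ v ^ n = 1 ∧ Commute u v} with hf_def
  have hconj : ∀ g u, f (g * u * g⁻¹) = f u := by
    intro g u
    refine (Nat.card_congr ((MulAut.conj g).toEquiv.subtypeEquiv fun v => ?_)).symm
    simp [commute_iff_eq]
  have hcentral : ∀ u ∈ center G, f u = if u ^ m = 1 then Nat.card {x : G | x ^ n = 1} else 0 := by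
    intro u hu
    split_ifs with hum <;> simp [hf_def, hum, (mem_center_iff.mp hu _).symm, commute_iff_eq]
  have hnoncentral : ∀ u ∉ center G, n ∣ (centralizer {u}).index * f u := by
    intro u hu
    by_cases hum : u ^ m = 1
    · have hcent : f u = Nat.card {x : centralizer {u} | x ^ n = 1} := by
        rw [Subgroup.card_setOf_pow_eq_one]
        simp [hf_def, hum, mem_centralizer_singleton_iff, commute_iff_eq, eq_comm, and_comm]
      rw [hcent]
      refine dvd_index_mul_card_pow_eq_one (hG _ fun htop => hu ?_) hn
      exact Set.singleton_subset_iff.mp (centralizer_eq_top_iff_subset.mp htop)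
    · simp [hf_def, hum]
  have hcenter_sum : ∑ u with u ∈ center G, f u =
      Nat.card {z : center G | z ^ m = 1} * Nat.card {x : G | x ^ n = 1} := by
    rw [Finset.sum_congr rfl fun u hu => hcentral u (Finset.mem_filter.mp hu).2,
      Finset.sum_ite, Finset.sum_const_zero, add_zero, Finset.sum_const, smul_eq_mul,
      Finset.filter_filter, Subgroup.card_setOf_pow_eq_one,
      Nat.card_eq_card_toFinset {x | x ∈ center G ∧ x ^ m = 1}, Set.toFinset_ofPred]
  rw [card_pow_mul_eq_one_eq_card_commuting_pairs hmn, card_commuting_pairs_eq_sum,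
    ← Finset.sum_filter_add_sum_filter_not Finset.univ (· ∈ center G), hcenter_sum]
  have hnc := Nat.modEq_zero_iff_dvd.mpr (dvd_sum_noncenter f hconj hnoncentral)
  simpa only [add_zero] using
    hnc.add_left (Nat.card {z : center G | z ^ m = 1} * Nat.card {x : G | x ^ n = 1})

theorem card_orderOf_eq_and_zpowers_eq [Finite G] {x : G} {d : ℕ} (hx : orderOf x = d) :
    Nat.card {y : G | orderOf y = d ∧ zpowers y = zpowers x} = d.totient := by
  classical
  cases nonempty_fintype G
  rw [← IsCyclic.card_orderOf_eq_totient (α := zpowers x) (by rw [Fintype.card_zpowers, hx]),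
    Nat.card_eq_card_toFinset, Set.toFinset_ofPred]
  symm
  refine Finset.card_bij (fun a _ => (a : G)) (fun a ha => ?_) (fun a _ b _ h => Subtype.ext h)
    fun y hy => ?_
  · simp only [Finset.mem_filter, Finset.mem_univ, true_and] at ha ⊢
    refine ⟨by rwa [orderOf_coe], eq_of_le_of_card_ge (zpowers_le.mpr a.2) ?_⟩
    rw [Nat.card_zpowers, Nat.card_zpowers, orderOf_coe, ha, hx]
  · simp only [Finset.mem_filter, Finset.mem_univ, true_and] at hy
    exact ⟨⟨y, hy.2 ▸ mem_zpowers y⟩, by simpa [orderOf_coe] using hy.1, rfl⟩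

theorem totient_dvd_card_orderOf_eq [Finite G] (d : ℕ) :
    d.totient ∣ Nat.card {x : G | orderOf x = d} := by
  classical
  cases nonempty_fintype G
  rw [Nat.card_eq_card_toFinset, Set.toFinset_ofPred, Finset.card_eq_sum_card_fiberwise
    (f := zpowers) fun x hx => Finset.mem_coe.mpr (Finset.mem_image_of_mem zpowers hx)]
  refine Finset.dvd_sum fun C hC => ?_
  obtain ⟨x, hx, rfl⟩ := Finset.mem_image.mp hC
  rw [Finset.filter_filter, ← card_orderOf_eq_and_zpowers_eq (Finset.mem_filter.mp hx).2,
    Nat.card_eq_card_toFinset, Set.toFinset_ofPred]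

theorem card_pow_prime_pow_succ_eq_one [Finite G] {p : ℕ} (hp : p.Prime) (c : ℕ) :
    Nat.card {x : G | x ^ p ^ (c + 1) = 1} =
      Nat.card {x : G | x ^ p ^ c = 1} + Nat.card {x : G | orderOf x = p ^ (c + 1)} := by
  have : Fact p.Prime := ⟨hp⟩
  have hdisj : Disjoint {x : G | x ^ p ^ c = 1} {x : G | orderOf x = p ^ (c + 1)} := by
    refine Set.disjoint_left.mpr fun x hx hord => ?_
    have := Nat.le_of_dvd (pow_pos hp.pos c) (hord ▸ orderOf_dvd_of_pow_eq_one hx)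
    exact (Nat.pow_lt_pow_right hp.one_lt c.lt_succ_self).not_ge this
  have hunion : {x : G | x ^ p ^ (c + 1) = 1} =
      {x : G | x ^ p ^ c = 1} ∪ {x : G | orderOf x = p ^ (c + 1)} := by
    ext x
    by_cases hx : x ^ p ^ c = 1
    · simp [hx, pow_succ, pow_mul]
    · refine ⟨fun h => Or.inr (orderOf_eq_prime_pow hx h), ?_⟩
      rintro (h | h)
      · exact absurd h hx
      · exact h ▸ pow_orderOf_eq_one x
  simp only [hunion, Nat.card_coe_set_eq]
  exact Set.ncard_union_eq hdisj

theorem prime_pow_dvd_card_pow_eq_one_of_succ [Finite G] {p : ℕ} (hp : p.Prime) {c : ℕ}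
    (h : p ^ (c + 1) ∣ Nat.card {x : G | x ^ p ^ (c + 1) = 1}) :
    p ^ c ∣ Nat.card {x : G | x ^ p ^ c = 1} := by
  have hord : p ^ c ∣ Nat.card {x : G | orderOf x = p ^ (c + 1)} :=
    (dvd_mul_right _ _).trans (Nat.totient_prime_pow_succ hp c ▸ totient_dvd_card_orderOf_eq _)
  rw [card_pow_prime_pow_succ_eq_one hp] at h
  exact (Nat.dvd_add_left hord).mp ((pow_dvd_pow p c.le_succ).trans h)

open Nat in
theorem ordProj_dvd_card_pow_eq_one [Finite G] (hG : ∀ H : Subgroup G, H ≠ ⊤ → FrobeniusDvd H)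
    {p : ℕ} (hp : p.Prime) :
    ordProj[p] (Nat.card G) ∣ Nat.card {x : G | x ^ ordProj[p] (Nat.card G) = 1} := by
  set q := ordProj[p] (Nat.card G)
  set m := ordCompl[p] (Nat.card G)
  have hq : q ∣ Nat.card G := Nat.ordProj_dvd _ p
  have hmq : m.Coprime q := ((Nat.coprime_ordCompl hp Nat.card_pos.ne').pow_left _).symm
  have key := card_pow_mul_eq_one_modEq hG hmq hq
  have hall : {x : G | x ^ (m * q) = 1} = Set.univ := by
    ext
    simp [q, m, mul_comm m, Nat.ordProj_mul_ordCompl_eq_self, pow_card_eq_one']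
  rw [hall, Nat.card_univ] at key
  let _ : CommGroup (center G) :=
    { (center G).toGroup with mul_comm := fun a b => Subtype.ext (mem_center_iff.mp b.2 a) }
  exact (coprime_card_setOf_pow_eq_one hmq).dvd_of_dvd_mul_left
    (Nat.modEq_zero_iff_dvd.mp (key.symm.trans (Nat.modEq_zero_iff_dvd.mpr hq)))

theorem prime_pow_dvd_card_pow_eq_one [Finite G]
    (hG : ∀ H : Subgroup G, H ≠ ⊤ → FrobeniusDvd H) {p k : ℕ} (hp : p.Prime)
    (hk : p ^ k ∣ Nat.card G) : p ^ k ∣ Nat.card {x : G | x ^ p ^ k = 1} := by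
  have hle : k ≤ (Nat.card G).factorization p :=
    (hp.pow_dvd_iff_le_factorization Nat.card_pos.ne').mp hk
  clear hk
  induction hle using Nat.decreasingInduction with
  | self => exact ordProj_dvd_card_pow_eq_one hG hp
  | of_succ c _ ih => exact prime_pow_dvd_card_pow_eq_one_of_succ hp ih

open Nat in
theorem frobeniusDvd_of_forall_ne_top [Finite G]
    (hG : ∀ H : Subgroup G, H ≠ ⊤ → FrobeniusDvd H) : FrobeniusDvd G := by
  intro n hn
  refine (Nat.dvd_iff_prime_pow_dvd_dvd _ _).mpr fun p k hp hpk => ?_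
  have hn0 : n ≠ 0 := ne_zero_of_dvd_ne_zero Nat.card_pos.ne' hn
  set q := ordProj[p] n
  have hq : q ∣ Nat.card G := (Nat.ordProj_dvd n p).trans hn
  have hmq : (ordCompl[p] n).Coprime q := ((Nat.coprime_ordCompl hp hn0).pow_left _).symm
  have key := card_pow_mul_eq_one_modEq hG hmq hq
  rw [mul_comm, Nat.ordProj_mul_ordCompl_eq_self] at key
  have hpq : p ^ k ∣ q := pow_dvd_pow p ((hp.pow_dvd_iff_le_factorization hn0).mp hpk)
  exact hpq.trans <| Nat.modEq_zero_iff_dvd.mp <| key.trans <| Nat.modEq_zero_iff_dvd.mpr <|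
    dvd_mul_of_dvd_right (prime_pow_dvd_card_pow_eq_one hG hp hq) _

end

theorem frobeniusDvd (G : Type*) [Group G] [Finite G] : FrobeniusDvd G := by
  induction h : Nat.card G using Nat.strong_induction_on generalizing G with
  | _ N ih =>
    subst h
    refine frobeniusDvd_of_forall_ne_top fun H hH => ih _ ?_ H rfl
    exact lt_of_le_of_ne H.card_le_card_group (mt H.eq_top_of_card_eq hH)

theorem stmt_10_general (G : Type*) [Group G] [Finite G] (n : ℕ)
    (h : n ∣ Nat.card G) :
    n ∣ Nat.card {x : G | x ^ n = 1} :=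
  frobeniusDvd G n h

theorem stmt_10 (G : Type*) [Group G] [Finite G] (n : ℕ) (hn : 0 < n)
    (h : n ∣ Nat.card G) :
    n ∣ Nat.card {x : G | x ^ n = 1} :=
  stmt_10_general G n h
end

section
/- If p and q are primes with p^m = q^n + 1 for positive integers m, n, then either (p,q,m,n) = (3,2,2,3), or p = 2^n + 1 is a Fermat prime with n a power of 2 (and m = 1, q = 2), or q = 2^m - 1 is a Mersenne prime with m prime (and n = 1, p = 2). -/
/-!
One of `p ^ m` and `q ^ n` is even, so `p = 2` or `q = 2`, and the equation becomes
`x ^ k ∓ 1 = 2 ^ t` with `x` an odd prime. For odd `k > 1` this is impossible: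
`x ^ k - 1 = (x - 1) · ∑_{i<k} x ^ i` (with `x = -q` in the `+` case), and the geometric sum is
odd, positive and divides a power of two, hence equals `1`. For even `k = 2j` the `-` case reads
`(x ^ j - 1)(x ^ j + 1) = 2 ^ t`, two powers of two at distance two, which forces `x ^ j = 3`;
the `+` case fails modulo `4`. What remains is `k = 1`, where the classical Fermat and Mersenne
conditions apply.
-/

open Finset

lemma odd_geom_sum {x : ℤ} (hx : Odd x) {k : ℕ} (hk : Odd k) :
    Odd (∑ i ∈ range k, x ^ i) := by
  rw [← ZMod.intCast_eq_one_iff_odd] at hx ⊢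
  push_cast
  simp [hx, ZMod.natCast_eq_one_iff_odd.mpr hk]

lemma Int.isUnit_of_odd_of_dvd_two_pow {s : ℤ} (hs : Odd s) {t : ℕ} (h : s ∣ 2 ^ t) :
    IsUnit s :=
  (Int.isCoprime_two_right.mpr hs).pow_right.isUnit_of_dvd' dvd_rfl h

lemma pow_eq_self_of_pow_sub_one_dvd_two_pow {x : ℤ} (hx : Odd x) {k t : ℕ} (hk : Odd k)
    (h : x ^ k - 1 ∣ 2 ^ t) : x ^ k = x := by
  have hfactor : x ^ k - 1 = (∑ i ∈ range k, x ^ i) * (x - 1) := (geom_sum_mul x k).symm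
  have hunit := Int.isUnit_of_odd_of_dvd_two_pow (odd_geom_sum hx hk)
    (dvd_of_mul_right_dvd (hfactor ▸ h))
  have hsum : ∑ i ∈ range k, x ^ i = 1 := by
    rcases Int.isUnit_iff.mp hunit with h1 | h1
    · exact h1
    · exact absurd h1 (hk.geom_sum_pos.trans' (by norm_num)).ne'
  linarith [hsum ▸ hfactor]

lemma eq_one_of_two_pow_add_two_eq_two_pow {a b : ℕ} (h : 2 ^ a + 2 = 2 ^ b) : a = 1 := by
  rcases a with _ | _ | a <;> rcases b with _ | _ | b <;> simp [pow_succ] at h ⊢ <;> omega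

lemma sq_eq_two_pow_add_one {x n : ℕ} (h : x ^ 2 = 2 ^ n + 1) : x = 3 ∧ n = 3 := by
  obtain ⟨y, rfl⟩ : ∃ y, x = y + 1 :=
    Nat.exists_eq_add_one_of_ne_zero (by rintro rfl; simp at h)
  have hprod : y * (y + 2) = 2 ^ n := by linarith
  obtain ⟨a, -, rfl⟩ := (Nat.dvd_prime_pow Nat.prime_two).mp (Dvd.intro _ hprod)
  obtain ⟨b, -, hb⟩ := (Nat.dvd_prime_pow Nat.prime_two).mp (Dvd.intro_left _ hprod)
  obtain rfl := eq_one_of_two_pow_add_two_eq_two_pow hb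
  exact ⟨rfl, Nat.pow_right_injective le_rfl (by simpa using hprod.symm)⟩

lemma eq_one_of_odd_of_sq_add_one_eq_two_pow {x m : ℕ} (hx : Odd x) (h : x ^ 2 + 1 = 2 ^ m) :
    x = 1 := by
  obtain ⟨t, rfl⟩ := hx
  have hsq : (2 * t + 1) ^ 2 = 4 * (t * t + t) + 1 := by ring
  rw [hsq] at h
  rcases m with _ | _ | m <;> simp [pow_succ] at h <;> omega

lemma eq_of_prime_pow_eq_two_pow_add_one {p m n : ℕ} (hp : p.Prime) (hn : n ≠ 0)
    (h : p ^ m = 2 ^ n + 1) :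
    (p = 3 ∧ m = 2 ∧ n = 3) ∨ (m = 1 ∧ p = 2 ^ n + 1 ∧ ∃ k : ℕ, n = 2 ^ k) := by
  rcases Nat.even_or_odd m with ⟨k, rfl⟩ | hm_odd
  · obtain ⟨hpk, rfl⟩ := sq_eq_two_pow_add_one (x := p ^ k) (by rw [← pow_mul, mul_two, h])
    obtain ⟨rfl, rfl⟩ := Nat.prime_three.pow_eq_iff.mp hpk
    exact Or.inl ⟨rfl, rfl, rfl⟩
  · have hp_odd : Odd p :=
      (Nat.odd_pow_iff hm_odd.pos.ne').mp (h ▸ (Nat.even_pow.mpr ⟨even_two, hn⟩).add_one)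
    have hz : (p : ℤ) ^ m = 2 ^ n + 1 := by exact_mod_cast h
    have hpow : (p : ℤ) ^ m = p := pow_eq_self_of_pow_sub_one_dvd_two_pow
      (by exact_mod_cast hp_odd) hm_odd ⟨1, by rw [hz]; ring⟩
    obtain rfl : m = 1 := (Nat.pow_eq_self_iff hp.one_lt).mp (by exact_mod_cast hpow)
    rw [pow_one] at h
    exact Or.inr ⟨rfl, h, Nat.pow_of_pow_add_prime one_lt_two hn (h ▸ hp)⟩

lemma eq_of_two_pow_eq_prime_pow_add_one {q m n : ℕ} (hq : q.Prime) (hq_odd : Odd q)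
    (hn : n ≠ 0) (h : 2 ^ m = q ^ n + 1) : n = 1 ∧ q = 2 ^ m - 1 ∧ m.Prime := by
  obtain rfl : n = 1 := by
    rcases Nat.even_or_odd n with ⟨k, rfl⟩ | hn_odd
    · have hqk := eq_one_of_odd_of_sq_add_one_eq_two_pow (hq_odd.pow (n := k))
        (by rw [← pow_mul, mul_two, h])
      rcases Nat.pow_eq_one.mp hqk with rfl | rfl
      · exact absurd hq Nat.not_prime_one
      · exact absurd rfl hn
    · have hz : (q : ℤ) ^ n + 1 = 2 ^ m := by exact_mod_cast h.symm
      have hpow : (-(q : ℤ)) ^ n = -q := pow_eq_self_of_pow_sub_one_dvd_two_pow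
        (by simpa using hq_odd) hn_odd ⟨-1, by rw [hn_odd.neg_pow, ← hz]; ring⟩
      rw [hn_odd.neg_pow, neg_inj] at hpow
      exact (Nat.pow_eq_self_iff hq.one_lt).mp (by exact_mod_cast hpow)
  rw [pow_one] at h
  have hq_eq : q = 2 ^ m - 1 := by omega
  refine ⟨rfl, hq_eq, (Nat.prime_of_pow_sub_one_prime ?_ (hq_eq ▸ hq)).2⟩
  rintro rfl
  exact Nat.not_prime_one (by simpa [hq_eq] using hq)

theorem stmt_14_general (p q m n : ℕ) (hp : p.Prime) (hq : q.Prime)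
    (hn : 0 < n) (h : p ^ m = q ^ n + 1) :
    (p = 3 ∧ q = 2 ∧ m = 2 ∧ n = 3) ∨
    (q = 2 ∧ m = 1 ∧ p = 2 ^ n + 1 ∧ ∃ k : ℕ, n = 2 ^ k) ∨
    (p = 2 ∧ n = 1 ∧ q = 2 ^ m - 1 ∧ m.Prime) := by
  rcases hq.eq_two_or_odd' with rfl | hq_odd
  · rcases eq_of_prime_pow_eq_two_pow_add_one hp hn.ne' h with
      ⟨rfl, rfl, rfl⟩ | ⟨rfl, hp_eq, hk⟩
    · exact Or.inl ⟨rfl, rfl, rfl, rfl⟩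
    · exact Or.inr (Or.inl ⟨rfl, rfl, hp_eq, hk⟩)
  · obtain rfl : p = 2 := hp.even_iff.mp (Nat.even_pow.mp (h ▸ hq_odd.pow.add_one)).1
    obtain ⟨rfl, hq_eq, hm⟩ := eq_of_two_pow_eq_prime_pow_add_one hq hq_odd hn.ne' h
    exact Or.inr (Or.inr ⟨rfl, rfl, hq_eq, hm⟩)

theorem stmt_14 (p q m n : ℕ) (hp : p.Prime) (hq : q.Prime)
    (hm : 0 < m) (hn : 0 < n) (h : p ^ m = q ^ n + 1) :
    (p = 3 ∧ q = 2 ∧ m = 2 ∧ n = 3) ∨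
    (q = 2 ∧ m = 1 ∧ p = 2 ^ n + 1 ∧ ∃ k : ℕ, n = 2 ^ k) ∨
    (p = 2 ∧ n = 1 ∧ q = 2 ^ m - 1 ∧ m.Prime) :=
  stmt_14_general p q m n hp hq hn h
end

section
/- There is no power of two q > 2 and prime p with q^2 + 1 = p and p - 2 prime such that q^2 - 3 divides q^4(q^4-1)(q^2-1); more simply: for q a power of 2 with q > 2, neither q^2+3 nor q^2-3 divides q^4(q^4-1)(q^2-1). -/
/-! Reducing modulo `q² = ∓3` turns `q⁴(q⁴ - 1)(q² - 1)` into `-288 = -2⁵·9`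
resp. `144 = 2⁴·9`. For even `q` both `q² + 3` and `q² - 3` are odd, so either
divisibility forces a divisor of `9`, which is impossible once `q ≥ 4`. -/

theorem Odd.dvd_of_dvd_two_pow_mul {n m k : ℕ} (hn : Odd n) (h : n ∣ 2 ^ k * m) : n ∣ m :=
  (hn.coprime_two_right.pow_right k).dvd_of_dvd_mul_left h

theorem Int.sq_add_three_dvd_iff (x : ℤ) :
    x ^ 2 + 3 ∣ x ^ 4 * (x ^ 4 - 1) * (x ^ 2 - 1) ↔ x ^ 2 + 3 ∣ 288 := by
  have key : x ^ 2 + 3 ∣ x ^ 4 * (x ^ 4 - 1) * (x ^ 2 - 1) - -288 :=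
    ⟨x ^ 8 - 4 * x ^ 6 + 11 * x ^ 4 - 32 * x ^ 2 + 96, by ring⟩
  rw [dvd_iff_dvd_of_dvd_sub key, dvd_neg]

theorem Int.sq_sub_three_dvd_iff (x : ℤ) :
    x ^ 2 - 3 ∣ x ^ 4 * (x ^ 4 - 1) * (x ^ 2 - 1) ↔ x ^ 2 - 3 ∣ 144 :=
  dvd_iff_dvd_of_dvd_sub ⟨x ^ 8 + 2 * x ^ 6 + 5 * x ^ 4 + 16 * x ^ 2 + 48, by ring⟩

theorem Nat.sq_add_three_dvd_iff {q : ℕ} (hq : 1 ≤ q) :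
    q ^ 2 + 3 ∣ q ^ 4 * (q ^ 4 - 1) * (q ^ 2 - 1) ↔ q ^ 2 + 3 ∣ 288 := by
  rw [← Int.natCast_dvd_natCast, ← Int.natCast_dvd_natCast (n := 288)]
  push_cast [Nat.one_le_pow _ _ hq]
  exact Int.sq_add_three_dvd_iff q

theorem Nat.sq_sub_three_dvd_iff {q : ℕ} (hq : 2 ≤ q) :
    q ^ 2 - 3 ∣ q ^ 4 * (q ^ 4 - 1) * (q ^ 2 - 1) ↔ q ^ 2 - 3 ∣ 144 := by
  have h3 : 3 ≤ q ^ 2 := by nlinarith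
  rw [← Int.natCast_dvd_natCast, ← Int.natCast_dvd_natCast (n := 144)]
  push_cast [h3, Nat.one_le_pow _ _ (by omega : 0 < q)]
  exact Int.sq_sub_three_dvd_iff q

theorem stmt_15 (f : ℕ) (hf : 2 ≤ f) (q : ℕ) (hq : q = 2 ^ f) :
    ¬ (q ^ 2 + 3 ∣ q ^ 4 * (q ^ 4 - 1) * (q ^ 2 - 1)) ∧
    ¬ (q ^ 2 - 3 ∣ q ^ 4 * (q ^ 4 - 1) * (q ^ 2 - 1)) := by
  have hq4 : 4 ≤ q := hq ▸ Nat.pow_le_pow_right two_pos hf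
  have hq16 : 16 ≤ q ^ 2 := by nlinarith
  have hqe : Even (q ^ 2) :=
    (hq ▸ Nat.even_pow.2 ⟨even_two, by omega⟩ : Even q).pow_of_ne_zero two_ne_zero
  constructor
  · intro h
    have h9 : q ^ 2 + 3 ∣ 9 := (hqe.add_odd (by decide)).dvd_of_dvd_two_pow_mul (k := 5)
      ((Nat.sq_add_three_dvd_iff (by omega)).1 h)
    have := Nat.le_of_dvd (by norm_num) h9
    omega
  · intro h
    have h9 : q ^ 2 - 3 ∣ 9 :=
      (Nat.Even.sub_odd (by omega) hqe (by decide)).dvd_of_dvd_two_pow_mul (k := 4)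
        ((Nat.sq_sub_three_dvd_iff (by omega)).1 h)
    have := Nat.le_of_dvd (by norm_num) h9
    omega
end

section
/- If q is a power of 2 with q > 2, q' is an odd prime power with q' ≡ ±1 (mod 4), and q^2 + 1 = q'(q' ∓ 1)/2, then there is no solution; equivalently, 2q^2 = (q' ± 1)(q' ∓ 2) has no solution with q even and q' odd. -/
/-!
In `(q' + 1) * (q' - 2)` the factor `q' - 2` is odd, so if the product is the power of two
`2 * (2 ^ f) ^ 2 = 2 ^ (2 * f + 1)` then `q' - 2 = ±1`. This leaves `q' ∈ {1, 3}`, where the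
product is `-2` or `4`, neither an odd power of two. The second equation is the first one for `-q'`.
-/

theorem Int.eq_one_or_eq_neg_one_of_odd_of_dvd_two_pow {d : ℤ} (hd : Odd d) {n : ℕ}
    (h : d ∣ 2 ^ n) : d = 1 ∨ d = -1 :=
  Int.isUnit_iff.mp <| ((Int.isCoprime_two_right.mpr hd).pow_right (n := n)).isUnit_of_dvd h

theorem two_pow_odd_ne_four (n : ℕ) : (2 : ℤ) ^ (2 * n + 1) ≠ 4 := by
  intro h
  have : 2 * n + 1 = 2 :=
    pow_right_injective₀ (M₀ := ℤ) (by norm_num) (by norm_num) (h.trans (by norm_num))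
  omega

theorem two_pow_odd_ne_add_one_mul_sub_two (n : ℕ) {q : ℤ} (hq : Odd q) :
    (2 : ℤ) ^ (2 * n + 1) ≠ (q + 1) * (q - 2) := by
  intro h
  have hdvd : q - 2 ∣ 2 ^ (2 * n + 1) := ⟨q + 1, by rw [h, mul_comm]⟩
  rcases Int.eq_one_or_eq_neg_one_of_odd_of_dvd_two_pow (hq.sub_even even_two) hdvd with h1 | h1
  · obtain rfl : q = 3 := by linarith
    exact two_pow_odd_ne_four n h
  · obtain rfl : q = 1 := by linarith
    have : (0 : ℤ) < 2 ^ (2 * n + 1) := by positivity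
    linarith

theorem stmt_18_general (f : ℕ) (q' : ℤ) (hodd : Odd q') :
    2 * ((2 : ℤ) ^ f) ^ 2 ≠ (q' + 1) * (q' - 2) ∧
    2 * ((2 : ℤ) ^ f) ^ 2 ≠ (q' - 1) * (q' + 2) := by
  have hpow : 2 * ((2 : ℤ) ^ f) ^ 2 = 2 ^ (2 * f + 1) := by ring
  refine ⟨hpow ▸ two_pow_odd_ne_add_one_mul_sub_two f hodd, ?_⟩
  have hneg : (q' - 1) * (q' + 2) = (-q' + 1) * (-q' - 2) := by ring
  rw [hpow, hneg]
  exact two_pow_odd_ne_add_one_mul_sub_two f hodd.neg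

theorem stmt_18 (f : ℕ) (hf : 2 ≤ f) (q' : ℤ) (hodd : Odd q') (hpos : 0 < q') :
    2 * ((2 : ℤ) ^ f) ^ 2 ≠ (q' + 1) * (q' - 2) ∧
    2 * ((2 : ℤ) ^ f) ^ 2 ≠ (q' - 1) * (q' + 2) :=
  stmt_18_general f q' hodd
end
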